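/- Let e ∈ [0, 1/2) and r* ≤ 1, and r_opt = (r* - 2e)/(1 - 2e). Then training GLS with rate r_opt on labels corrupted by symmetric noise with rate e reproduces pointwise the clean GLS objective with rate r*: for every p ∈ (0,1) and clean label y, (1-e)·ℓ_{r_opt}(p, y) + e·ℓ_{r_opt}(p, 1-y) = (1-e)·[(1-r_opt/2)ℓ(p,y)+(r_opt/2)ℓ(p,1-y)] + e·[(1-r_opt/2)ℓ(p,1-y)+(r_opt/2)ℓ(p,y)] = (1 - r*/2)ℓ(p,y) + (r*/2)ℓ(p,1-y) = ℓ_{r*}(p,y). -/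

import Mathlib

noncomputable def ell (p : ℝ) (y : Bool) : ℝ :=
  if y then -Real.log p else -Real.log (1 - p)

noncomputable def ellS (s p : ℝ) (y : Bool) : ℝ :=
  (1 - s/2) * ell p y + (s/2) * ell p (!y)

theorem noisy_gls_recovers_clean (e rstar p : ℝ) (y : Bool)
    (he0 : 0 ≤ e) (he : e < 1/2) (hr : rstar ≤ 1) (hp : 0 < p) (hp1 : p < 1) :
    (1 - e) * ellS ((rstar - 2*e) / (1 - 2*e)) p y
      + e * ellS ((rstar - 2*e) / (1 - 2*e)) p (!y) = ellS rstar p y := by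
  have h : (1 - 2*e) ≠ 0 := by linarith
  simp only [ellS, Bool.not_not]
  have h' : (1 - e*2) ≠ 0 := by linarith
  field_simp
  ring
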